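/- For 0 ≤ a ≤ b, the first-order Marcum Q-function satisfies Q₁(a, b) ≤ exp(−(b−a)²/2). -/

import Mathlib

open MeasureTheory ProbabilityTheory Filter

noncomputable instance (M : ℕ) : MeasureSpace (EuclideanSpace ℂ (Fin M)) where
  volume := (volume : Measure (Fin M → ℂ)).map (WithLp.toLp 2)
instance (M : ℕ) : BorelSpace (EuclideanSpace ℂ (Fin M)) :=
  inferInstance
instance (M : ℕ) : PolishSpace (EuclideanSpace ℂ (Fin M)) :=
  inferInstance

/-- The circularly-symmetric complex Gaussian distribution `CN(μ, v)` on `ℂ`,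
given by the density `z ↦ (π v)⁻¹ exp(-|z-μ|²/v)` w.r.t. Lebesgue measure. -/
noncomputable def cn (μ : ℂ) (v : ℝ) : Measure ℂ :=
  volume.withDensity fun z =>
    ENNReal.ofReal ((Real.pi * v)⁻¹ * Real.exp (-(‖z - μ‖) ^ 2 / v))

/-- The circularly-symmetric complex Gaussian distribution `CN(μ, v • I_M)` on `ℂ^M`. -/
noncomputable def cnVec (M : ℕ) (μ : EuclideanSpace ℂ (Fin M)) (v : ℝ) :
    Measure (EuclideanSpace ℂ (Fin M)) :=
  volume.withDensity fun x =>
    ENNReal.ofReal (((Real.pi * v) ^ M)⁻¹ * Real.exp (-‖x - μ‖ ^ 2 / v))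

/-- The modified Bessel function of the first kind of order zero,
`I₀(x) = ∑ (x/2)^(2n) / (n!)²`. -/
noncomputable def besselI0 (x : ℝ) : ℝ :=
  ∑' n : ℕ, (x / 2) ^ (2 * n) / ((Nat.factorial n : ℝ)) ^ 2

/-- The first-order Marcum Q-function,
`Q₁(a,b) = ∫_b^∞ x exp(−(x²+a²)/2) I₀(ax) dx`. -/
noncomputable def marcumQ1 (a b : ℝ) : ℝ :=
  ∫ x in Set.Ioi b, x * Real.exp (-(x ^ 2 + a ^ 2) / 2) * besselI0 (a * x)

/-!
Expanding `I₀(ax)` in its power series turns the integrand into `∑ₙ p_α(n) · x p_{x²/2}(n)`,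
where `pₜ` are the Poisson weights of mean `t` and `α = a² / 2`. Since
`d/dt ∑_{k ≤ n} pₜ(k) = -pₜ(n)`, we get `∫_b^∞ x p_{x²/2}(n) dx = ∑_{k ≤ n} p_β(k)` with
`β = b² / 2`, so `Q₁(a, b) = ∑ₙ p_α(n) ∑_{k ≤ n} p_β(k)`. For `γ = ab / 2` we have `αβ = γ²` and
`α ≤ γ`, hence `αⁿ βᵏ ≤ γⁿ⁺ᵏ` whenever `k ≤ n`, and the double sum is at most
`e^{2γ - α - β} ∑ₙ p_γ(n) = e^{-(b - a)² / 2}`.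
-/

open Real Finset Topology
open scoped Nat

/-- `ProbabilityTheory.poissonPMFReal` with a real parameter, so that it can be differentiated
in `t`. -/
noncomputable def poissonWeight (t : ℝ) (n : ℕ) : ℝ := exp (-t) * t ^ n / n !

lemma poissonWeight_nonneg {t : ℝ} (ht : 0 ≤ t) (n : ℕ) : 0 ≤ poissonWeight t n := by
  unfold poissonWeight
  positivity

lemma hasSum_poissonWeight (t : ℝ) : HasSum (poissonWeight t) 1 := by
  have h := (NormedSpace.expSeries_div_hasSum_exp t).mul_left (exp (-t))
  rw [← Real.exp_eq_exp_ℝ, ← exp_add, neg_add_cancel, exp_zero] at h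
  rwa [show poissonWeight t = fun n => exp (-t) * (t ^ n / n !) from
    funext fun n => mul_div_assoc ..]

lemma sum_range_poissonWeight_le_one {t : ℝ} (ht : 0 ≤ t) (n : ℕ) :
    ∑ k ∈ range (n + 1), poissonWeight t k ≤ 1 :=
  (hasSum_poissonWeight t).tsum_eq ▸
    (hasSum_poissonWeight t).summable.sum_le_tsum _ fun k _ => poissonWeight_nonneg ht k

lemma hasDerivAt_poissonWeight (n : ℕ) (t : ℝ) :
    HasDerivAt (fun t => poissonWeight t (n + 1))
      (poissonWeight t n - poissonWeight t (n + 1)) t := by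
  refine (((hasDerivAt_neg t).exp.fun_mul (hasDerivAt_pow (n + 1) t)).div_const
    ((n + 1)! : ℝ)).congr_deriv ?_
  simp only [poissonWeight, Nat.factorial_succ, Nat.cast_mul, Nat.cast_succ, Nat.add_sub_cancel]
  field_simp
  ring

lemma hasDerivAt_sum_range_poissonWeight (n : ℕ) (t : ℝ) :
    HasDerivAt (fun t => ∑ k ∈ range (n + 1), poissonWeight t k) (-poissonWeight t n) t := by
  induction n with
  | zero => simpa [poissonWeight] using (hasDerivAt_neg t).exp
  | succ n ih =>
    simp only [sum_range_succ _ (n + 1)]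
    exact (ih.add (hasDerivAt_poissonWeight n t)).congr_deriv (by ring)

lemma tendsto_sum_range_poissonWeight_atTop (n : ℕ) :
    Tendsto (fun t => ∑ k ∈ range (n + 1), poissonWeight t k) atTop (𝓝 0) := by
  rw [← sum_const_zero (s := range (n + 1))]
  refine tendsto_finsetSum _ fun k _ => ?_
  simpa [poissonWeight, mul_comm, mul_div_assoc] using
    (tendsto_pow_mul_exp_neg_atTop_nhds_zero k).div_const (k ! : ℝ)

lemma hasDerivAt_sum_range_poissonWeight_sq_div_two (n : ℕ) (x : ℝ) :
    HasDerivAt (fun x => ∑ k ∈ range (n + 1), poissonWeight (x ^ 2 / 2) k)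
      (-(x * poissonWeight (x ^ 2 / 2) n)) x := by
  have hsq : HasDerivAt (fun x : ℝ => x ^ 2 / 2) x x := by
    simpa using (hasDerivAt_pow 2 x).div_const 2
  have h := (hasDerivAt_sum_range_poissonWeight n (x ^ 2 / 2)).comp x hsq
  rw [neg_mul, mul_comm] at h
  exact h

lemma tendsto_sum_range_poissonWeight_sq_div_two_atTop (n : ℕ) :
    Tendsto (fun x => ∑ k ∈ range (n + 1), poissonWeight (x ^ 2 / 2) k) atTop (𝓝 0) :=
  (tendsto_sum_range_poissonWeight_atTop n).comp <|
    (tendsto_pow_atTop two_ne_zero).atTop_div_const two_pos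

lemma mul_poissonWeight_sq_div_two_nonneg {x : ℝ} (hx : 0 ≤ x) (n : ℕ) :
    0 ≤ x * poissonWeight (x ^ 2 / 2) n :=
  mul_nonneg hx (poissonWeight_nonneg (by positivity) n)

lemma integrableOn_Ioi_mul_poissonWeight_sq_div_two (n : ℕ) {b : ℝ} (hb : 0 ≤ b) :
    IntegrableOn (fun x => x * poissonWeight (x ^ 2 / 2) n) (Set.Ioi b) :=
  (integrableOn_Ioi_deriv_of_nonpos' (fun x _ => hasDerivAt_sum_range_poissonWeight_sq_div_two n x)
    (fun _ hx => neg_nonpos.2 (mul_poissonWeight_sq_div_two_nonneg (hb.trans hx.le) n))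
    (tendsto_sum_range_poissonWeight_sq_div_two_atTop n)).neg.congr_fun
    (fun _ _ => neg_neg _) measurableSet_Ioi

lemma integral_Ioi_mul_poissonWeight_sq_div_two (n : ℕ) {b : ℝ} (hb : 0 ≤ b) :
    ∫ x in Set.Ioi b, x * poissonWeight (x ^ 2 / 2) n =
      ∑ k ∈ range (n + 1), poissonWeight (b ^ 2 / 2) k := by
  have h := integral_Ioi_of_hasDerivAt_of_nonpos'
    (fun x _ => hasDerivAt_sum_range_poissonWeight_sq_div_two n x)
    (fun _ hx => neg_nonpos.2 (mul_poissonWeight_sq_div_two_nonneg (hb.trans hx.le) n))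
    (tendsto_sum_range_poissonWeight_sq_div_two_atTop n)
  rwa [integral_neg, zero_sub, neg_inj] at h

lemma mul_exp_mul_besselI0_eq_tsum (a x : ℝ) :
    x * exp (-(x ^ 2 + a ^ 2) / 2) * besselI0 (a * x) =
      ∑' n, poissonWeight (a ^ 2 / 2) n * (x * poissonWeight (x ^ 2 / 2) n) := by
  rw [besselI0, ← tsum_mul_left]
  refine tsum_congr fun n => ?_
  have hexp : exp (-(x ^ 2 + a ^ 2) / 2) = exp (-(a ^ 2 / 2)) * exp (-(x ^ 2 / 2)) := by
    rw [← exp_add]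
    ring_nf
  rw [hexp, poissonWeight, poissonWeight]
  ring

theorem marcumQ1_eq_tsum (a : ℝ) {b : ℝ} (hb : 0 ≤ b) :
    marcumQ1 a b = ∑' n, poissonWeight (a ^ 2 / 2) n *
      ∑ k ∈ range (n + 1), poissonWeight (b ^ 2 / 2) k := by
  set F : ℕ → ℝ → ℝ := fun n x => poissonWeight (a ^ 2 / 2) n * (x * poissonWeight (x ^ 2 / 2) n)
  have hF_int (n : ℕ) : IntegrableOn (F n) (Set.Ioi b) :=
    (integrableOn_Ioi_mul_poissonWeight_sq_div_two n hb).const_mul _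
  have hF_integral (n : ℕ) : ∫ x in Set.Ioi b, F n x =
      poissonWeight (a ^ 2 / 2) n * ∑ k ∈ range (n + 1), poissonWeight (b ^ 2 / 2) k := by
    rw [integral_const_mul, integral_Ioi_mul_poissonWeight_sq_div_two n hb]
  have hF_norm (n : ℕ) : ∫ x in Set.Ioi b, ‖F n x‖ = ∫ x in Set.Ioi b, F n x :=
    setIntegral_congr_fun measurableSet_Ioi fun x hx => norm_of_nonneg <|
      mul_nonneg (poissonWeight_nonneg (by positivity) n)
        (mul_poissonWeight_sq_div_two_nonneg (hb.trans hx.le) n)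
  have hF_summable : Summable fun n => ∫ x in Set.Ioi b, ‖F n x‖ := by
    simp only [hF_norm, hF_integral]
    refine (hasSum_poissonWeight (a ^ 2 / 2)).summable.of_nonneg_of_le (fun n => ?_) fun n => ?_
    · exact mul_nonneg (poissonWeight_nonneg (by positivity) n)
        (sum_nonneg fun k _ => poissonWeight_nonneg (by positivity) k)
    · exact mul_le_of_le_one_right (poissonWeight_nonneg (by positivity) n)
        (sum_range_poissonWeight_le_one (by positivity) n)
  simp only [marcumQ1, mul_exp_mul_besselI0_eq_tsum a]
  rw [← integral_tsum_of_summable_integral_norm hF_int hF_summable]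
  exact tsum_congr hF_integral

lemma pow_mul_pow_le_pow_mul_pow {R : Type*} [CommSemiring R] [PartialOrder R] [IsOrderedRing R]
    {α β γ : R} (hα : 0 ≤ α) (hαγ : α ≤ γ) (hαβ : α * β = γ ^ 2) {k n : ℕ} (hkn : k ≤ n) :
    α ^ n * β ^ k ≤ γ ^ n * γ ^ k := by
  obtain ⟨m, rfl⟩ := Nat.exists_eq_add_of_le hkn
  calc α ^ (k + m) * β ^ k = (α * β) ^ k * α ^ m := by ring
    _ ≤ (γ ^ 2) ^ k * γ ^ m := by
        rw [hαβ]
        exact mul_le_mul_of_nonneg_left (pow_le_pow_left₀ hα hαγ m)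
          (pow_nonneg (pow_nonneg (hα.trans hαγ) 2) k)
    _ = γ ^ (k + m) * γ ^ k := by ring

lemma poissonWeight_mul_poissonWeight_le {α β γ : ℝ} (hα : 0 ≤ α) (hαγ : α ≤ γ)
    (hαβ : α * β = γ ^ 2) {k n : ℕ} (hkn : k ≤ n) :
    poissonWeight α n * poissonWeight β k ≤
      exp (2 * γ - α - β) * (poissonWeight γ n * poissonWeight γ k) := by
  have hexp : exp (2 * γ - α - β) * (exp (-γ) * exp (-γ)) = exp (-α) * exp (-β) := by
    simp only [← exp_add]
    ring_nf
  calc poissonWeight α n * poissonWeight β k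
      = exp (-α) * exp (-β) * (α ^ n * β ^ k) / (n ! * k !) := by
        simp only [poissonWeight]; ring
    _ ≤ exp (-α) * exp (-β) * (γ ^ n * γ ^ k) / (n ! * k !) := by
        gcongr exp (-α) * exp (-β) * ?_ / _
        exact pow_mul_pow_le_pow_mul_pow hα hαγ hαβ hkn
    _ = exp (2 * γ - α - β) * (poissonWeight γ n * poissonWeight γ k) := by
        simp only [← hexp, poissonWeight]; ring

theorem tsum_poissonWeight_mul_sum_range_le {α β γ : ℝ} (hα : 0 ≤ α) (hβ : 0 ≤ β)
    (hαγ : α ≤ γ) (hαβ : α * β = γ ^ 2) :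
    ∑' n, poissonWeight α n * ∑ k ∈ range (n + 1), poissonWeight β k ≤ exp (2 * γ - α - β) := by
  have hγ : 0 ≤ γ := hα.trans hαγ
  have hterm (n : ℕ) : poissonWeight α n * ∑ k ∈ range (n + 1), poissonWeight β k ≤
      exp (2 * γ - α - β) * poissonWeight γ n := by
    calc poissonWeight α n * ∑ k ∈ range (n + 1), poissonWeight β k
        = ∑ k ∈ range (n + 1), poissonWeight α n * poissonWeight β k := mul_sum _ _ _
      _ ≤ ∑ k ∈ range (n + 1), exp (2 * γ - α - β) * (poissonWeight γ n * poissonWeight γ k) :=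
          sum_le_sum fun k hk => poissonWeight_mul_poissonWeight_le hα hαγ hαβ
            (Nat.lt_succ_iff.mp (mem_range.mp hk))
      _ = exp (2 * γ - α - β) * poissonWeight γ n * ∑ k ∈ range (n + 1), poissonWeight γ k := by
          simp only [mul_sum, mul_assoc]
      _ ≤ exp (2 * γ - α - β) * poissonWeight γ n :=
          mul_le_of_le_one_right (by positivity [poissonWeight_nonneg hγ n])
            (sum_range_poissonWeight_le_one hγ n)
  have hbound : HasSum (fun n => exp (2 * γ - α - β) * poissonWeight γ n)
      (exp (2 * γ - α - β)) := by
    simpa using (hasSum_poissonWeight γ).mul_left (exp (2 * γ - α - β))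
  refine (Summable.tsum_le_tsum hterm ?_ hbound.summable).trans_eq hbound.tsum_eq
  exact hbound.summable.of_nonneg_of_le (fun n => mul_nonneg (poissonWeight_nonneg hα n)
    (sum_nonneg fun k _ => poissonWeight_nonneg hβ k)) hterm

/-- exponential upper bound on the Marcum Q-function. For
`0 ≤ a ≤ b`, `Q₁(a, b) ≤ exp(−(b−a)²/2)`. -/
theorem marcumQ1_le_exp (a b : ℝ) (ha : 0 ≤ a) (hab : a ≤ b) :
    marcumQ1 a b ≤ Real.exp (-(b - a) ^ 2 / 2) := by
  have hb : 0 ≤ b := ha.trans hab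
  rw [marcumQ1_eq_tsum a hb]
  refine (tsum_poissonWeight_mul_sum_range_le (γ := a * b / 2) (by positivity) (by positivity)
    (by nlinarith) (by ring)).trans_eq ?_
  congr 1
  ring
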